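/- arXiv:2407.02205 — 2 statements merged into one kernel-verified Lean document; each statement's English description precedes it below -/
import Mathlib

section
/- Let q be a nonzero complex number that is not a root of unity. Then for all integers n ≥ 1, N ≥ n and 0 ≤ j < n one has ∑_{ℓ=0}^{n} (−1)^ℓ · C(n,ℓ)_q · C(N+ℓ, j)_q · q^{ℓ(j−(n−1))} = 0. In particular ∑_{ℓ=0}^{n} (−1)^ℓ · C(n,ℓ)_q · C(N+ℓ, n−1)_q = 0. -/
noncomputable section

/-- The quantum integer `[n]_q = (q^n - q^{-n})/(q - q^{-1})`. -/
def qint (q : ℂ) (n : ℤ) : ℂ := (q ^ n - q ^ (-n)) / (q - q⁻¹)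

/-- The quantum factorial `[n]_q!`. -/
def qfact (q : ℂ) (n : ℕ) : ℂ := ∏ m ∈ Finset.range n, qint q (m + 1)

/-- The quantum binomial coefficient `C(n,m)_q`. -/
def qbinom (q : ℂ) (n m : ℕ) : ℂ := qfact q n / (qfact q m * qfact q (n - m))

namespace QAux

variable {q : ℂ}

lemma hden (hq : q ≠ 0) (hroot : ∀ n : ℕ, 0 < n → q ^ n ≠ 1) : q - q⁻¹ ≠ 0 := by
  intro h
  have h2 : q * q = 1 := by
    have : q = q⁻¹ := by linear_combination h
    calc q * q = q * q⁻¹ := by rw [← this]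
    _ = 1 := mul_inv_cancel₀ hq
  exact hroot 2 (by norm_num) (by rw [pow_two]; exact h2)

lemma qint_ne_zero (hq : q ≠ 0) (hroot : ∀ n : ℕ, 0 < n → q ^ n ≠ 1) (k : ℕ) :
    qint q ((k : ℤ) + 1) ≠ 0 := by
  unfold qint
  apply div_ne_zero _ (hden hq hroot)
  intro h
  have he : q ^ ((k : ℤ) + 1) = q ^ (-((k : ℤ) + 1)) := by linear_combination h
  have : q ^ (2 * k + 2 : ℕ) = 1 := by
    have : q ^ ((k : ℤ) + 1) * q ^ (-((k : ℤ) + 1)) = 1 := by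
      rw [← zpow_add₀ hq, add_neg_cancel, zpow_zero]
    rw [← he, ← zpow_add₀ hq] at this
    rw [← zpow_natCast]
    convert this using 2
    push_cast; ring
  exact hroot (2 * k + 2) (by omega) this

lemma qfact_ne_zero (hq : q ≠ 0) (hroot : ∀ n : ℕ, 0 < n → q ^ n ≠ 1) (n : ℕ) :
    qfact q n ≠ 0 :=
  Finset.prod_ne_zero_iff.2 fun m _ => qint_ne_zero hq hroot m

lemma qfact_succ (n : ℕ) : qfact q (n + 1) = qfact q n * qint q ((n : ℤ) + 1) :=
  Finset.prod_range_succ _ _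

lemma qbinom_zero (hq : q ≠ 0) (hroot : ∀ n : ℕ, 0 < n → q ^ n ≠ 1) (n : ℕ) :
    qbinom q n 0 = 1 := by
  unfold qbinom
  rw [Nat.sub_zero]
  have h0 : qfact q 0 = 1 := Finset.prod_range_zero _
  rw [h0, one_mul, div_self (qfact_ne_zero hq hroot n)]

lemma qbinom_self (hq : q ≠ 0) (hroot : ∀ n : ℕ, 0 < n → q ^ n ≠ 1) (n : ℕ) :
    qbinom q n n = 1 := by
  unfold qbinom
  rw [Nat.sub_self]
  have h0 : qfact q 0 = 1 := Finset.prod_range_zero _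
  rw [h0, mul_one, div_self (qfact_ne_zero hq hroot n)]

lemma key_mul (A B : ℂ) (hA : A ≠ 0) (hB : B ≠ 0) :
    A * B - (A * B)⁻¹ = B⁻¹ * (A - A⁻¹) + A * (B - B⁻¹) := by field_simp; ring

lemma qint_pascal (hq : q ≠ 0) (c b : ℕ) :
    qint q ((c : ℤ) + (b : ℤ) + 2)
      = q ^ (-((b : ℤ) + 1)) * qint q ((c : ℤ) + 1)
        + q ^ ((c : ℤ) + 1) * qint q ((b : ℤ) + 1) := by
  unfold qint
  rw [← mul_div_assoc, ← mul_div_assoc, ← add_div]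
  congr 1
  have h : ((c : ℤ) + (b : ℤ) + 2) = ((c : ℤ) + 1) + ((b : ℤ) + 1) := by ring
  rw [h, zpow_neg, zpow_neg, zpow_neg, zpow_add₀ hq]
  exact key_mul _ _ (zpow_ne_zero _ hq) (zpow_ne_zero _ hq)

lemma pascal (hq : q ≠ 0) (hroot : ∀ n : ℕ, 0 < n → q ^ n ≠ 1) (c b : ℕ) :
    qbinom q (c + b + 2) (b + 1)
      = q ^ (-((b : ℤ) + 1)) * qbinom q (c + b + 1) (b + 1)
        + q ^ ((c : ℤ) + 1) * qbinom q (c + b + 1) b := by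
  unfold qbinom
  have e1 : c + b + 2 - (b + 1) = c + 1 := by omega
  have e2 : c + b + 1 - (b + 1) = c := by omega
  have e3 : c + b + 1 - b = c + 1 := by omega
  rw [e1, e2, e3]
  have f1 : qfact q (c + b + 2) = qfact q (c + b + 1) * qint q ((c : ℤ) + (b : ℤ) + 2) := by
    rw [show c + b + 2 = (c + b + 1) + 1 from rfl, qfact_succ]
    congr 2
    all_goals push_cast; ring
  have f2 : qfact q (c + 1) = qfact q c * qint q ((c : ℤ) + 1) := qfact_succ c
  have f3 : qfact q (b + 1) = qfact q b * qint q ((b : ℤ) + 1) := qfact_succ b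
  rw [f1, f2, f3, qint_pascal hq c b]
  have hb := qint_ne_zero hq hroot b
  have hc := qint_ne_zero hq hroot c
  have h1 := qfact_ne_zero hq hroot b
  have h2 := qfact_ne_zero hq hroot c
  field_simp

end QAux

namespace QAux

variable {q : ℂ}

def Ssum (q : ℂ) (n N j : ℕ) : ℂ :=
  ∑ ℓ ∈ Finset.range (n + 1),
    (-1 : ℂ) ^ ℓ * qbinom q n ℓ * qbinom q (N + ℓ) j *
      q ^ ((ℓ : ℤ) * ((j : ℤ) - ((n : ℤ) - 1)))

lemma step (hq : q ≠ 0) (hroot : ∀ n : ℕ, 0 < n → q ^ n ≠ 1) (m N j : ℕ) :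
    Ssum q (m + 1) N j = ∑ ℓ ∈ Finset.range (m + 1),
      (-1 : ℂ) ^ ℓ * qbinom q m ℓ * q ^ ((ℓ : ℤ) * ((j : ℤ) - (m : ℤ) - 1)) *
        (qbinom q (N + ℓ) j - q ^ (j : ℤ) * qbinom q (N + ℓ + 1) j) := by
  classical
  set U : ℕ → ℂ := fun ℓ => if ℓ ≤ m then
      (-1 : ℂ) ^ ℓ * q ^ (-(ℓ : ℤ)) * qbinom q m ℓ * qbinom q (N + ℓ) j *
        q ^ ((ℓ : ℤ) * ((j : ℤ) - (m : ℤ))) else 0 with hU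
  set V : ℕ → ℂ := fun ℓ => if ℓ = 0 then 0 else
      (-1 : ℂ) ^ ℓ * q ^ ((m : ℤ) + 1 - (ℓ : ℤ)) * qbinom q m (ℓ - 1) * qbinom q (N + ℓ) j *
        q ^ ((ℓ : ℤ) * ((j : ℤ) - (m : ℤ))) with hV
  have main_eq : ∀ ℓ ∈ Finset.range (m + 2),
      (-1 : ℂ) ^ ℓ * qbinom q (m + 1) ℓ * qbinom q (N + ℓ) j *
        q ^ ((ℓ : ℤ) * ((j : ℤ) - (((m : ℕ) + 1 : ℕ) : ℤ) + 1)) = U ℓ + V ℓ := by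
    intro ℓ hℓ
    rw [Finset.mem_range] at hℓ
    rcases eq_or_ne ℓ 0 with rfl | h0
    · simp only [hU, hV, if_pos (Nat.zero_le m), if_pos rfl]
      simp [qbinom_zero hq hroot]
    rcases eq_or_ne ℓ (m + 1) with rfl | hm
    · simp only [hU, hV, if_neg (by omega : ¬ (m + 1 ≤ m)), if_neg h0, zero_add,
        Nat.add_sub_cancel]
      rw [qbinom_self hq hroot, qbinom_self hq hroot]
      rw [show ((m : ℤ) + 1 - (((m : ℕ) + 1 : ℕ) : ℤ)) = 0 from by push_cast; ring, zpow_zero]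
      push_cast
      ring
    · obtain ⟨b, rfl⟩ : ∃ b, ℓ = b + 1 := ⟨ℓ - 1, by omega⟩
      have hbm : b + 1 ≤ m := by omega
      have h := pascal hq hroot (m - 1 - b) b
      rw [show m - 1 - b + b + 2 = m + 1 from by omega,
          show m - 1 - b + b + 1 = m from by omega,
          show ((m - 1 - b : ℕ) : ℤ) + 1 = (m : ℤ) - (b : ℤ) from by omega] at h
      rw [h]
      simp only [hU, hV, if_pos hbm, if_neg (by omega : ¬ (b + 1 = 0)),
        Nat.add_sub_cancel]
      push_cast
      rw [show (m : ℤ) + 1 - ((b : ℤ) + 1) = (m : ℤ) - (b : ℤ) from by ring]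
      ring
  have hsum : Ssum q (m + 1) N j = (∑ ℓ ∈ Finset.range (m + 2), U ℓ)
      + (∑ ℓ ∈ Finset.range (m + 2), V ℓ) := by
    rw [← Finset.sum_add_distrib]
    unfold Ssum
    rw [show m + 1 + 1 = m + 2 from rfl]
    apply Finset.sum_congr rfl
    intro ℓ hℓ
    rw [← main_eq ℓ hℓ]
    congr 2
    push_cast
    ring
  have e1 : U (m + 1) = 0 := by simp only [hU]; rw [if_neg (by omega : ¬ (m + 1 ≤ m))]
  have e2 : V 0 = 0 := by simp [hV]
  rw [hsum, Finset.sum_range_succ U (m + 1), e1, add_zero,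
    Finset.sum_range_succ' V (m + 1), e2, add_zero, ← Finset.sum_add_distrib]
  apply Finset.sum_congr rfl
  intro ℓ hℓ
  rw [Finset.mem_range] at hℓ
  simp only [hU, hV]
  rw [if_pos (by omega : ℓ ≤ m), if_neg (by omega : ¬ (ℓ + 1 = 0))]
  simp only [Nat.add_sub_cancel]
  have h1 : q ^ (-(ℓ : ℤ)) * q ^ ((ℓ : ℤ) * ((j : ℤ) - (m : ℤ)))
      = q ^ ((ℓ : ℤ) * ((j : ℤ) - (m : ℤ) - 1)) := by
    rw [← zpow_add₀ hq]; congr 1; ring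
  have h2 : q ^ ((m : ℤ) + 1 - ((ℓ : ℤ) + 1)) * q ^ (((ℓ : ℤ) + 1) * ((j : ℤ) - (m : ℤ)))
      = q ^ ((ℓ : ℤ) * ((j : ℤ) - (m : ℤ) - 1)) * q ^ (j : ℤ) := by
    rw [← zpow_add₀ hq, ← zpow_add₀ hq]; congr 1; ring
  rw [show N + (ℓ + 1) = N + ℓ + 1 from by omega]
  push_cast
  linear_combination ((-1:ℂ)^ℓ * qbinom q m ℓ * qbinom q (N+ℓ) j) * h1
    - ((-1:ℂ)^ℓ * qbinom q m ℓ * qbinom q (N+ℓ+1) j) * h2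

lemma main (hq : q ≠ 0) (hroot : ∀ n : ℕ, 0 < n → q ^ n ≠ 1) :
    ∀ j n N : ℕ, 1 ≤ n → n ≤ N → j < n → Ssum q n N j = 0 := by
  intro j
  induction j with
  | zero =>
    intro n N hn hN hj
    obtain ⟨m, rfl⟩ : ∃ m, n = m + 1 := ⟨n - 1, by omega⟩
    rw [step hq hroot]
    apply Finset.sum_eq_zero
    intro ℓ _
    rw [qbinom_zero hq hroot, qbinom_zero hq hroot]
    norm_num
  | succ j ih =>
    intro n N hn hN hj
    obtain ⟨m, rfl⟩ : ∃ m, n = m + 1 := ⟨n - 1, by omega⟩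
    rw [step hq hroot]
    have hb : ∀ ℓ ∈ Finset.range (m + 1),
        (-1 : ℂ) ^ ℓ * qbinom q m ℓ * q ^ ((ℓ : ℤ) * (((j + 1 : ℕ) : ℤ) - (m : ℤ) - 1)) *
          (qbinom q (N + ℓ) (j + 1) - q ^ ((j + 1 : ℕ) : ℤ) * qbinom q (N + ℓ + 1) (j + 1))
        = (-(q ^ ((N : ℤ) + 1))) *
            ((-1 : ℂ) ^ ℓ * qbinom q m ℓ * qbinom q (N + ℓ) j *
              q ^ ((ℓ : ℤ) * ((j : ℤ) - ((m : ℤ) - 1)))) := by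
      intro ℓ hℓ
      have h := pascal hq hroot (N + ℓ - j - 1) j
      rw [show N + ℓ - j - 1 + j + 2 = N + ℓ + 1 from by omega,
          show N + ℓ - j - 1 + j + 1 = N + ℓ from by omega,
          show ((N + ℓ - j - 1 : ℕ) : ℤ) + 1 = (N : ℤ) + (ℓ : ℤ) - (j : ℤ) from by omega] at h
      rw [h]
      have h1 : q ^ ((j + 1 : ℕ) : ℤ) * q ^ (-((j : ℤ) + 1)) = 1 := by
        rw [← zpow_add₀ hq, show ((j + 1 : ℕ) : ℤ) + (-((j : ℤ) + 1)) = 0 from by push_cast; ring,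
          zpow_zero]
      have h2 : q ^ ((j + 1 : ℕ) : ℤ) * q ^ ((N : ℤ) + (ℓ : ℤ) - (j : ℤ)) = q ^ ((N : ℤ) + (ℓ : ℤ) + 1) := by
        rw [← zpow_add₀ hq]; congr 1; push_cast; ring
      have h3 : q ^ ((ℓ : ℤ) * (((j + 1 : ℕ) : ℤ) - (m : ℤ) - 1)) * q ^ ((N : ℤ) + (ℓ : ℤ) + 1)
          = q ^ ((N : ℤ) + 1) * q ^ ((ℓ : ℤ) * ((j : ℤ) - ((m : ℤ) - 1))) := by
        rw [← zpow_add₀ hq, ← zpow_add₀ hq]; congr 1; push_cast; ring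
      linear_combination
        (-((-1 : ℂ) ^ ℓ * qbinom q m ℓ * q ^ ((ℓ : ℤ) * (((j + 1 : ℕ) : ℤ) - (m : ℤ) - 1)) *
            qbinom q (N + ℓ) (j + 1))) * h1
        - ((-1 : ℂ) ^ ℓ * qbinom q m ℓ * q ^ ((ℓ : ℤ) * (((j + 1 : ℕ) : ℤ) - (m : ℤ) - 1)) *
            qbinom q (N + ℓ) j) * h2
        - ((-1 : ℂ) ^ ℓ * qbinom q m ℓ * qbinom q (N + ℓ) j) * h3
    rw [Finset.sum_congr rfl hb, ← Finset.mul_sum]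
    have hS := ih m N (by omega) (by omega) (by omega)
    unfold Ssum at hS
    rw [hS, mul_zero]

end QAux

theorem stmt_0 (q : ℂ) (hq : q ≠ 0) (hroot : ∀ n : ℕ, 0 < n → q ^ n ≠ 1)
    (n N j : ℕ) (hn : 1 ≤ n) (hN : n ≤ N) (hj : j < n) :
    (∑ ℓ ∈ Finset.range (n + 1),
      (-1 : ℂ) ^ ℓ * qbinom q n ℓ * qbinom q (N + ℓ) j *
        q ^ ((ℓ : ℤ) * ((j : ℤ) - ((n : ℤ) - 1))) = 0) ∧
    (∑ ℓ ∈ Finset.range (n + 1),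
      (-1 : ℂ) ^ ℓ * qbinom q n ℓ * qbinom q (N + ℓ) (n - 1) = 0) := by
  constructor
  · exact QAux.main hq hroot j n N hn hN hj
  · have h : (∑ ℓ ∈ Finset.range (n + 1),
        (-1 : ℂ) ^ ℓ * qbinom q n ℓ * qbinom q (N + ℓ) (n - 1))
        = QAux.Ssum q n N (n - 1) := by
      unfold QAux.Ssum
      apply Finset.sum_congr rfl
      intro ℓ _
      rw [show (((n - 1 : ℕ) : ℤ) - ((n : ℤ) - 1)) = 0 from by omega, mul_zero, zpow_zero,
        mul_one]
    rw [h]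
    exact QAux.main hq hroot (n - 1) n N hn hN (by omega)
end
end

section
/- For all distinct indices 1 ≤ i ≠ j ≤ N, every integer m ≥ 1, and both choices of sign, the following identities of linear operators on ℂ[x₁,…,x_N] hold: (i) [μ_i∂_{j,q^m}, μ_j∂_{i,q^m}] = {(γ_iγ_j^{−1})^m}_{q^m}; (ii) [∂_{i,q^m}∂_{j,q^m}, μ_iμ_j] = {(qγ_iγ_j)^m}_{q^m}; (iii) [μ_i∂_j, μ_j∂_{i,q²}]_{q^{±1}} = (±1)/(q−q^{−1}) · ( q^{±1}γ_i^{±2}γ_j^{∓1} − q^{±2}γ_i^{±2}γ_j^{±1}/[2]_q − γ_i^{∓2}γ_j^{±1}/[2]_q ); (iv) [∂_{i,q²}∂_j, μ_iμ_j]_{q^{±1}} = (±1)/(q−q^{−1}) · ( q^{±2}γ_i^{±2}γ_j^{±1}/[2]_q + γ_i^{∓2}γ_j^{±1}/[2]_q − q^{∓1}γ_i^{∓2}γ_j^{∓1} ). -/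
noncomputable section

open MvPolynomial

/-- Build a linear operator on `ℂ[x₁,…,x_N]` from its values on the monomial basis. -/
def mkOp {N : ℕ} (f : (Fin N →₀ ℕ) → MvPolynomial (Fin N) ℂ) :
    Module.End ℂ (MvPolynomial (Fin N) ℂ) :=
  (MvPolynomial.basisMonomials (Fin N) ℂ).constr ℂ fun α => f α

/-- `μ_j`: multiplication by `x_j`. -/
def mu {N : ℕ} (j : Fin N) : Module.End ℂ (MvPolynomial (Fin N) ℂ) :=
  mkOp fun α => monomial (α + Finsupp.single j 1) 1

/-- `γ_j^e` (e ∈ ℤ): multiply the monomial `x^α` by `q^{e·α_j}`. -/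
def gam {N : ℕ} (q : ℂ) (j : Fin N) (e : ℤ) : Module.End ℂ (MvPolynomial (Fin N) ℂ) :=
  mkOp fun α => q ^ (e * (α j : ℤ)) • monomial α 1

/-- The `p`-shifted partial `q`-derivative in direction `j`:
`x^α ↦ [α_j]_p · x^{α - ε_j}` (zero when `α_j = 0`, since `[0]_p = 0`). -/
def del {N : ℕ} (p : ℂ) (j : Fin N) : Module.End ℂ (MvPolynomial (Fin N) ℂ) :=
  mkOp fun α => qint p (α j) • monomial (α - Finsupp.single j 1) 1

/- ------------------- auxiliary lemmas ------------------- -/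

lemma mkOp_monomial {N : ℕ} (f : (Fin N →₀ ℕ) → MvPolynomial (Fin N) ℂ) (α : Fin N →₀ ℕ) :
    mkOp f (monomial α 1) = f α := by
  have := (MvPolynomial.basisMonomials (Fin N) ℂ).constr_basis ℂ f α
  rwa [coe_basisMonomials] at this

lemma mu_monomial {N : ℕ} (j : Fin N) (α : Fin N →₀ ℕ) :
    mu j (monomial α 1) = monomial (α + Finsupp.single j 1) 1 := mkOp_monomial _ _
lemma gam_monomial {N : ℕ} (q : ℂ) (j : Fin N) (e : ℤ) (α : Fin N →₀ ℕ) :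
    gam q j e (monomial α 1) = q ^ (e * (α j : ℤ)) • monomial α 1 := mkOp_monomial _ _
lemma del_monomial {N : ℕ} (p : ℂ) (j : Fin N) (α : Fin N →₀ ℕ) :
    del p j (monomial α 1) = qint p (α j) • monomial (α - Finsupp.single j 1) 1 :=
  mkOp_monomial _ _

open Finsupp in
lemma L1 {N : ℕ} (p r : ℂ) (i j : Fin N) (α : Fin N →₀ ℕ) :
    (mu i * del p j * (mu j * del r i)) (monomial α 1)
    = (qint r (α i) * qint p ((α - single i 1 + single j 1 : Fin N →₀ ℕ) j)) •
        monomial (α - single i 1 + single j 1 - single j 1 + single i 1) 1 := by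
  rw [Module.End.mul_apply, Module.End.mul_apply, Module.End.mul_apply, del_monomial, map_smul,
    mu_monomial, map_smul, del_monomial, map_smul, map_smul, mu_monomial, smul_smul]

open Finsupp in
lemma L2 {N : ℕ} (p r : ℂ) (i j : Fin N) (α : Fin N →₀ ℕ) :
    (del p i * del r j * (mu i * mu j)) (monomial α 1)
    = (qint r ((α + single j 1 + single i 1 : Fin N →₀ ℕ) j) *
        qint p ((α + single j 1 + single i 1 - single j 1 : Fin N →₀ ℕ) i)) •
        monomial (α + single j 1 + single i 1 - single j 1 - single i 1) 1 := by
  rw [Module.End.mul_apply, Module.End.mul_apply, Module.End.mul_apply, mu_monomial,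
    mu_monomial, del_monomial, map_smul, del_monomial, smul_smul]

open Finsupp in
lemma L3 {N : ℕ} (p r : ℂ) (i j : Fin N) (α : Fin N →₀ ℕ) :
    (mu i * mu j * (del p i * del r j)) (monomial α 1)
    = (qint r (α j) * qint p ((α - single j 1 : Fin N →₀ ℕ) i)) •
        monomial (α - single j 1 - single i 1 + single j 1 + single i 1) 1 := by
  rw [Module.End.mul_apply, Module.End.mul_apply, Module.End.mul_apply, del_monomial, map_smul,
    del_monomial, map_smul, map_smul, map_smul, mu_monomial, map_smul, mu_monomial, smul_smul]

lemma L4 {N : ℕ} (q : ℂ) (e f : ℤ) (i j : Fin N) (α : Fin N →₀ ℕ) :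
    (gam q i e * gam q j f) (monomial α 1)
    = (q ^ (e * (α i : ℤ)) * q ^ (f * (α j : ℤ))) • monomial α 1 := by
  rw [Module.End.mul_apply, gam_monomial, map_smul, gam_monomial, smul_smul, mul_comm]

open Finsupp in
lemma ev1 {N : ℕ} {i j : Fin N} (hij : i ≠ j) (α : Fin N →₀ ℕ) :
    (α - single i 1 + single j 1 : Fin N →₀ ℕ) j = α j + 1 := by
  simp [Finsupp.add_apply, Finsupp.tsub_apply, Finsupp.single_eq_of_ne' hij]

open Finsupp in
lemma ev2 {N : ℕ} {i j : Fin N} (hij : i ≠ j) (α : Fin N →₀ ℕ) :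
    (α - single j 1 : Fin N →₀ ℕ) i = α i := by
  simp [Finsupp.tsub_apply, Finsupp.single_eq_of_ne' (Ne.symm hij)]

open Finsupp in
lemma ev3 {N : ℕ} {i j : Fin N} (hij : i ≠ j) (α : Fin N →₀ ℕ) :
    (α + single j 1 + single i 1 : Fin N →₀ ℕ) j = α j + 1 := by
  simp [Finsupp.add_apply, Finsupp.single_eq_of_ne' hij]

open Finsupp in
lemma ev4 {N : ℕ} {i j : Fin N} (hij : i ≠ j) (α : Fin N →₀ ℕ) :
    (α + single j 1 + single i 1 - single j 1 : Fin N →₀ ℕ) i = α i + 1 := by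
  simp [Finsupp.add_apply, Finsupp.tsub_apply, Finsupp.single_eq_of_ne' hij,
    Finsupp.single_eq_of_ne' (Ne.symm hij)]

open Finsupp in
lemma m1 {N : ℕ} (i j : Fin N) (α : Fin N →₀ ℕ) :
    α - single i 1 + single j 1 - single j 1 = α - single i 1 := add_tsub_cancel_right _ _

open Finsupp in
lemma m2 {N : ℕ} {i : Fin N} {α : Fin N →₀ ℕ} (h : α i ≠ 0) :
    α - single i 1 + single i 1 = α := by
  apply tsub_add_cancel_of_le
  rw [Finsupp.single_le_iff]
  omega

open Finsupp in
lemma m3 {N : ℕ} (i j : Fin N) (α : Fin N →₀ ℕ) :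
    α + single j 1 + single i 1 - single j 1 - single i 1 = α := by
  rw [add_right_comm, add_tsub_cancel_right, add_tsub_cancel_right]

open Finsupp in
lemma m4 {N : ℕ} {i j : Fin N} {α : Fin N →₀ ℕ} (hb : α j ≠ 0)
    (ha : (α - single j 1 : Fin N →₀ ℕ) i ≠ 0) :
    α - single j 1 - single i 1 + single j 1 + single i 1 = α := by
  rw [add_right_comm, m2 ha, m2 hb]

lemma qint_zero (p : ℂ) : qint p 0 = 0 := by simp [qint]

lemma qint_natCast (p : ℂ) (a : ℕ) : qint p (a : ℤ) = (p ^ a - (p ^ a)⁻¹) / (p - p⁻¹) := by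
  rw [qint, zpow_natCast, zpow_neg, zpow_natCast]

lemma qint_two (q : ℂ) : qint q 2 = (q ^ 2 - (q ^ 2)⁻¹) / (q - q⁻¹) := by
  rw [show (2 : ℤ) = ((2 : ℕ) : ℤ) by norm_num, qint_natCast]

lemma sub_inv_ne_zero {x : ℂ} (hx : x ≠ 0) (h : x ^ 2 ≠ 1) : x - x⁻¹ ≠ 0 := by
  intro h0
  apply h
  have : x = x⁻¹ := by linear_combination h0
  field_simp [hx] at this
  linear_combination this

open Finsupp in
lemma sm1 {N : ℕ} {i j : Fin N} (hij : i ≠ j) (r p : ℂ) (α : Fin N →₀ ℕ) :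
    (qint r (α i) * qint p ((α - single i 1 + single j 1 : Fin N →₀ ℕ) j)) •
        (monomial (α - single i 1 + single j 1 - single j 1 + single i 1) (1 : ℂ))
    = (qint r (α i) * qint p ((α j + 1 : ℕ))) • monomial α 1 := by
  rw [ev1 hij, m1]
  by_cases ha : α i = 0
  · simp [ha, qint_zero]
  · rw [m2 ha]

open Finsupp in
lemma sm2 {N : ℕ} {i j : Fin N} (hij : i ≠ j) (r p : ℂ) (α : Fin N →₀ ℕ) :
    (qint r ((α + single j 1 + single i 1 : Fin N →₀ ℕ) j) *
        qint p ((α + single j 1 + single i 1 - single j 1 : Fin N →₀ ℕ) i)) •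
        (monomial (α + single j 1 + single i 1 - single j 1 - single i 1) (1 : ℂ))
    = (qint r ((α j + 1 : ℕ)) * qint p ((α i + 1 : ℕ))) • monomial α 1 := by
  rw [ev3 hij, ev4 hij, m3]

open Finsupp in
lemma sm3 {N : ℕ} {i j : Fin N} (hij : i ≠ j) (r p : ℂ) (α : Fin N →₀ ℕ) :
    (qint r (α j) * qint p ((α - single j 1 : Fin N →₀ ℕ) i)) •
        (monomial (α - single j 1 - single i 1 + single j 1 + single i 1) (1 : ℂ))
    = (qint r (α j) * qint p (α i)) • monomial α 1 := by
  rw [ev2 hij]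
  by_cases hb : α j = 0
  · simp [hb, qint_zero]
  · by_cases ha : α i = 0
    · simp [ha, qint_zero]
    · rw [m4 hb (by rw [ev2 hij]; exact ha)]

lemma zpc (x : ℂ) (c a : ℕ) : x ^ ((c : ℤ) * (a : ℤ)) = (x ^ c) ^ a := by
  rw [← Nat.cast_mul, zpow_natCast, pow_mul]

lemma zpmc (x : ℂ) (c a : ℕ) : x ^ (-(c : ℤ) * (a : ℤ)) = ((x ^ c) ^ a)⁻¹ := by
  rw [neg_mul, zpow_neg, zpc]

lemma zpm (x : ℂ) (m : ℕ) : x ^ (-(m : ℤ)) = (x ^ m)⁻¹ := by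
  rw [zpow_neg, zpow_natCast]

lemma zp2l (x : ℂ) (a : ℕ) : x ^ ((2 : ℤ) * (a : ℤ)) = (x ^ 2) ^ a := by
  rw [show (2 : ℤ) = ((2 : ℕ) : ℤ) by norm_num, zpc]

lemma zpm2l (x : ℂ) (a : ℕ) : x ^ ((-2 : ℤ) * (a : ℤ)) = ((x ^ 2) ^ a)⁻¹ := by
  rw [show (-2 : ℤ) = -((2 : ℕ) : ℤ) by norm_num, zpmc]

lemma zp1l (x : ℂ) (a : ℕ) : x ^ ((1 : ℤ) * (a : ℤ)) = x ^ a := by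
  rw [one_mul, zpow_natCast]

lemma zpm1l (x : ℂ) (a : ℕ) : x ^ ((-1 : ℤ) * (a : ℤ)) = (x ^ a)⁻¹ := by
  rw [show (-1 : ℤ) = -((1 : ℕ) : ℤ) by norm_num, zpmc, pow_one]

lemma zpl2 (x : ℂ) : x ^ (2 : ℤ) = x ^ 2 := by
  rw [show (2 : ℤ) = ((2 : ℕ) : ℤ) by norm_num, zpow_natCast]

lemma zplm2 (x : ℂ) : x ^ (-2 : ℤ) = (x ^ 2)⁻¹ := by
  rw [show (-2 : ℤ) = -((2 : ℕ) : ℤ) by norm_num, zpm]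

lemma comb1 {N : ℕ} (M : MvPolynomial (Fin N) ℂ) {c1 c2 s t1 t2 : ℂ}
    (h : c1 - c2 = s * (t1 - t2)) :
    c1 • M - c2 • M = s • (t1 • M - t2 • M) := by
  match_scalars
  linear_combination h

lemma comb2 {N : ℕ} (M : MvPolynomial (Fin N) ℂ) {c1 c2 s u v t1 t2 : ℂ}
    (h : c1 - c2 = s * (u * t1 - v * t2)) :
    c1 • M - c2 • M = s • (u • (t1 • M) - v • (t2 • M)) := by
  match_scalars
  linear_combination h

lemma comb3 {N : ℕ} (M : MvPolynomial (Fin N) ℂ) {c1 c2 x s u d e t1 t2 t3 : ℂ}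
    (h : c1 - x * c2 = s * (u * t1 - d * t2 - e * t3)) :
    c1 • M - x • (c2 • M) = s • (u • (t1 • M) - d • (t2 • M) - e • (t3 • M)) := by
  match_scalars
  linear_combination h

lemma comb4 {N : ℕ} (M : MvPolynomial (Fin N) ℂ) {c1 c2 x s d1 d2 d3 t1 t2 t3 : ℂ}
    (h : c1 - x * c2 = s * (d1 * t1 + d2 * t2 - d3 * t3)) :
    c1 • M - x • (c2 • M) = s • (d1 • (t1 • M) + d2 • (t2 • M) - d3 • (t3 • M)) := by
  match_scalars
  linear_combination h

set_option maxHeartbeats 1000000 in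
theorem stmt_2 (q : ℂ) (hq : q ≠ 0) (hroot : ∀ n : ℕ, 0 < n → q ^ n ≠ 1)
    (N : ℕ) (i j : Fin N) (hij : i ≠ j) (m : ℕ) (hm : 1 ≤ m) :
    -- (i)  [μ_i∂_{j,q^m}, μ_j∂_{i,q^m}] = {(γ_iγ_j^{−1})^m}_{q^m}
    (mu i * del (q ^ m) j * (mu j * del (q ^ m) i)
        - mu j * del (q ^ m) i * (mu i * del (q ^ m) j)
      = (q ^ (m : ℤ) - q ^ (-(m : ℤ)))⁻¹ •
          (gam q i (m : ℤ) * gam q j (-(m : ℤ)) - gam q i (-(m : ℤ)) * gam q j (m : ℤ))) ∧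
    -- (ii)  [∂_{i,q^m}∂_{j,q^m}, μ_iμ_j] = {(qγ_iγ_j)^m}_{q^m}
    (del (q ^ m) i * del (q ^ m) j * (mu i * mu j)
        - mu i * mu j * (del (q ^ m) i * del (q ^ m) j)
      = (q ^ (m : ℤ) - q ^ (-(m : ℤ)))⁻¹ •
          (q ^ (m : ℤ) • (gam q i (m : ℤ) * gam q j (m : ℤ))
            - q ^ (-(m : ℤ)) • (gam q i (-(m : ℤ)) * gam q j (-(m : ℤ))))) ∧
    -- (iii)  [μ_i∂_j, μ_j∂_{i,q²}]_{q^{±1}}, upper sign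
    (mu i * del q j * (mu j * del (q ^ 2) i)
        - q • (mu j * del (q ^ 2) i * (mu i * del q j))
      = (q - q⁻¹)⁻¹ •
          (q • (gam q i 2 * gam q j (-1))
            - (q ^ (2 : ℤ) / qint q 2) • (gam q i 2 * gam q j 1)
            - (qint q 2)⁻¹ • (gam q i (-2) * gam q j 1))) ∧
    -- (iii)  lower sign
    (mu i * del q j * (mu j * del (q ^ 2) i)
        - q⁻¹ • (mu j * del (q ^ 2) i * (mu i * del q j))
      = (-(q - q⁻¹)⁻¹) •
          (q⁻¹ • (gam q i (-2) * gam q j 1)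
            - (q ^ (-2 : ℤ) / qint q 2) • (gam q i (-2) * gam q j (-1))
            - (qint q 2)⁻¹ • (gam q i 2 * gam q j (-1)))) ∧
    -- (iv)  [∂_{i,q²}∂_j, μ_iμ_j]_{q^{±1}}, upper sign
    (del (q ^ 2) i * del q j * (mu i * mu j)
        - q • (mu i * mu j * (del (q ^ 2) i * del q j))
      = (q - q⁻¹)⁻¹ •
          ((q ^ (2 : ℤ) / qint q 2) • (gam q i 2 * gam q j 1)
            + (qint q 2)⁻¹ • (gam q i (-2) * gam q j 1)
            - q⁻¹ • (gam q i (-2) * gam q j (-1)))) ∧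
    -- (iv)  lower sign
    (del (q ^ 2) i * del q j * (mu i * mu j)
        - q⁻¹ • (mu i * mu j * (del (q ^ 2) i * del q j))
      = (-(q - q⁻¹)⁻¹) •
          ((q ^ (-2 : ℤ) / qint q 2) • (gam q i (-2) * gam q j (-1))
            + (qint q 2)⁻¹ • (gam q i 2 * gam q j (-1))
            - q • (gam q i 2 * gam q j 1))) := by
  have hqq : q - q⁻¹ ≠ 0 := sub_inv_ne_zero hq (hroot 2 two_pos)
  have hQm : q ^ m - (q ^ m)⁻¹ ≠ 0 := sub_inv_ne_zero (pow_ne_zero m hq)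
    (by rw [← pow_mul]; exact hroot (m * 2) (by omega))
  have hQ2 : q ^ 2 - (q ^ 2)⁻¹ ≠ 0 := sub_inv_ne_zero (pow_ne_zero 2 hq)
    (by rw [← pow_mul]; exact hroot 4 (by norm_num))
  have hqr : q * q⁻¹ = 1 := mul_inv_cancel₀ hq
  have hRel1 : (q - q⁻¹) * (q - q⁻¹)⁻¹ = 1 := mul_inv_cancel₀ hqq
  have hRel2 : (q ^ 2 - (q ^ 2)⁻¹) * (q ^ 2 - (q ^ 2)⁻¹)⁻¹ = 1 := mul_inv_cancel₀ hQ2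
  have i2 : (qint q 2)⁻¹ = (q - q⁻¹) * (q ^ 2 - (q ^ 2)⁻¹)⁻¹ := by
    rw [qint_two, inv_div, div_eq_mul_inv]
  have i2u : q ^ (2 : ℤ) / qint q 2 = q ^ 2 * ((q - q⁻¹) * (q ^ 2 - (q ^ 2)⁻¹)⁻¹) := by
    rw [zpl2, div_eq_mul_inv, i2]
  have i2l : q ^ (-2 : ℤ) / qint q 2 = (q ^ 2)⁻¹ * ((q - q⁻¹) * (q ^ 2 - (q ^ 2)⁻¹)⁻¹) := by
    rw [zplm2, div_eq_mul_inv, i2]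
  refine ⟨?_, ?_, ?_, ?_, ?_, ?_⟩
  · -- (i)
    refine (MvPolynomial.basisMonomials (Fin N) ℂ).ext fun α => ?_
    simp only [coe_basisMonomials]
    rw [LinearMap.sub_apply, L1, L1, sm1 hij, sm1 hij.symm, LinearMap.smul_apply,
      LinearMap.sub_apply, L4, L4]
    refine comb1 _ ?_
    have hEr : (q ^ m - (q ^ m)⁻¹) * (q ^ m - (q ^ m)⁻¹)⁻¹ = 1 := mul_inv_cancel₀ hQm
    simp only [qint_natCast, pow_succ, zpc, zpmc, zpow_natCast, zpm]
    linear_combination ((-1:ℂ) * ((q ^ m) ^ (α i))⁻¹ * ((q ^ m) ^ (α j)) * (q ^ m - (q ^ m)⁻¹)⁻¹ + ((q ^ m) ^ (α i)) * ((q ^ m) ^ (α j))⁻¹ * (q ^ m - (q ^ m)⁻¹)⁻¹) * hEr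
  · -- (ii)
    refine (MvPolynomial.basisMonomials (Fin N) ℂ).ext fun α => ?_
    simp only [coe_basisMonomials]
    rw [LinearMap.sub_apply, L2, L3, sm2 hij, sm3 hij, LinearMap.smul_apply,
      LinearMap.sub_apply, LinearMap.smul_apply, LinearMap.smul_apply, L4, L4]
    refine comb2 _ ?_
    have hEr : (q ^ m - (q ^ m)⁻¹) * (q ^ m - (q ^ m)⁻¹)⁻¹ = 1 := mul_inv_cancel₀ hQm
    have hQr : (q ^ m) * (q ^ m)⁻¹ = 1 := mul_inv_cancel₀ (pow_ne_zero m hq)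
    simp only [qint_natCast, pow_succ, zpc, zpmc, zpow_natCast, zpm]
    linear_combination ((-1:ℂ) * (q ^ m)⁻¹ * ((q ^ m) ^ (α i))⁻¹ * ((q ^ m) ^ (α j))⁻¹ * (q ^ m - (q ^ m)⁻¹)⁻¹ + (q ^ m) * ((q ^ m) ^ (α i)) * ((q ^ m) ^ (α j)) * (q ^ m - (q ^ m)⁻¹)⁻¹) * hEr + (((q ^ m) ^ (α i))⁻¹ * ((q ^ m) ^ (α j))⁻¹ * (q ^ m - (q ^ m)⁻¹)⁻¹ ^ 2 + (-1:ℂ) * ((q ^ m) ^ (α i))⁻¹ * ((q ^ m) ^ (α j)) * (q ^ m - (q ^ m)⁻¹)⁻¹ ^ 2 + (-1:ℂ) * ((q ^ m) ^ (α i)) * ((q ^ m) ^ (α j))⁻¹ * (q ^ m - (q ^ m)⁻¹)⁻¹ ^ 2 + ((q ^ m) ^ (α i)) * ((q ^ m) ^ (α j)) * (q ^ m - (q ^ m)⁻¹)⁻¹ ^ 2) * hQr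
  · -- (iii) upper
    refine (MvPolynomial.basisMonomials (Fin N) ℂ).ext fun α => ?_
    simp only [coe_basisMonomials]
    rw [LinearMap.sub_apply, L1, sm1 hij, LinearMap.smul_apply, L1, sm1 hij.symm,
      LinearMap.smul_apply, LinearMap.sub_apply, LinearMap.sub_apply, LinearMap.smul_apply,
      LinearMap.smul_apply, LinearMap.smul_apply, L4, L4, L4]
    refine comb3 _ ?_
    simp only [i2u, i2l, i2, qint_natCast, pow_succ, zp2l, zpm2l, zp1l, zpm1l]
    linear_combination (q * (q ^ (α j))⁻¹ * ((q ^ 2) ^ (α i)) * (q - q⁻¹)⁻¹) * hRel2 + ((-1:ℂ) * q⁻¹ * (q ^ (α j))⁻¹ * ((q ^ 2) ^ (α i))⁻¹ * (q - q⁻¹)⁻¹ * (q ^ 2 - (q ^ 2)⁻¹)⁻¹ + q⁻¹ * (q ^ (α j))⁻¹ * ((q ^ 2) ^ (α i)) * (q - q⁻¹)⁻¹ * (q ^ 2 - (q ^ 2)⁻¹)⁻¹ + q⁻¹ * (q ^ (α j)) * ((q ^ 2) ^ (α i))⁻¹ * (q - q⁻¹)⁻¹ * (q ^ 2 - (q ^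 2)⁻¹)⁻¹ + (-1:ℂ) * q * (q ^ (α j)) * ((q ^ 2) ^ (α i)) * (q - q⁻¹)⁻¹ * (q ^ 2 - (q ^ 2)⁻¹)⁻¹) * hqr
  · -- (iii) lower
    refine (MvPolynomial.basisMonomials (Fin N) ℂ).ext fun α => ?_
    simp only [coe_basisMonomials]
    rw [LinearMap.sub_apply, L1, sm1 hij, LinearMap.smul_apply, L1, sm1 hij.symm,
      LinearMap.smul_apply, LinearMap.sub_apply, LinearMap.sub_apply, LinearMap.smul_apply,
      LinearMap.smul_apply, LinearMap.smul_apply, L4, L4, L4]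
    refine comb3 _ ?_
    simp only [i2u, i2l, i2, qint_natCast, pow_succ, zp2l, zpm2l, zp1l, zpm1l]
    linear_combination ((-1:ℂ) * q⁻¹ * (q ^ (α j)) * ((q ^ 2) ^ (α i))⁻¹ * (q - q⁻¹)⁻¹) * hRel2 + ((-1:ℂ) * q⁻¹ * (q ^ (α j))⁻¹ * ((q ^ 2) ^ (α i))⁻¹ * (q - q⁻¹)⁻¹ * (q ^ 2 - (q ^ 2)⁻¹)⁻¹ + q * (q ^ (α j))⁻¹ * ((q ^ 2) ^ (α i)) * (q - q⁻¹)⁻¹ * (q ^ 2 - (q ^ 2)⁻¹)⁻¹ + q * (q ^ (α j)) * ((q ^ 2) ^ (α i))⁻¹ * (q - q⁻¹)⁻¹ * (q ^ 2 - (q ^ 2)⁻¹)⁻¹ + (-1:ℂ) * q * (q ^ (α j)) * ((q ^ 2) ^ (α i)) * (q - q⁻¹)⁻¹ * (q ^ 2 - (q ^ 2)⁻¹)⁻¹) * hqr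
  · -- (iv) upper
    refine (MvPolynomial.basisMonomials (Fin N) ℂ).ext fun α => ?_
    simp only [coe_basisMonomials]
    rw [LinearMap.sub_apply, L2, sm2 hij, LinearMap.smul_apply, L3, sm3 hij,
      LinearMap.smul_apply, LinearMap.sub_apply, LinearMap.add_apply, LinearMap.smul_apply,
      LinearMap.smul_apply, LinearMap.smul_apply, L4, L4, L4]
    refine comb4 _ ?_
    simp only [i2u, i2l, i2, qint_natCast, pow_succ, zp2l, zpm2l, zp1l, zpm1l]
    linear_combination ((-1:ℂ) * q⁻¹ * (q ^ (α j))⁻¹ * ((q ^ 2) ^ (α i))⁻¹ * (q - q⁻¹)⁻¹) * hRel2 + ((-1:ℂ) * q⁻¹ * (q ^ (α j)) * ((q ^ 2) ^ (α i))⁻¹ * (q - q⁻¹)⁻¹ * (q ^ 2 - (q ^ 2)⁻¹)⁻¹ + q * (q ^ (α j))⁻¹ * ((q ^ 2) ^ (α i))⁻¹ * (q - q⁻¹)⁻¹ * (q ^ 2 - (q ^ 2)⁻¹)⁻¹ + (-1:ℂ) * q * (q ^ (α j))⁻¹ * ((q ^ 2) ^ (α i)) * (q - q⁻¹)⁻¹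 * (q ^ 2 - (q ^ 2)⁻¹)⁻¹ + q * (q ^ (α j)) * ((q ^ 2) ^ (α i)) * (q - q⁻¹)⁻¹ * (q ^ 2 - (q ^ 2)⁻¹)⁻¹) * hqr
  · -- (iv) lower
    refine (MvPolynomial.basisMonomials (Fin N) ℂ).ext fun α => ?_
    simp only [coe_basisMonomials]
    rw [LinearMap.sub_apply, L2, sm2 hij, LinearMap.smul_apply, L3, sm3 hij,
      LinearMap.smul_apply, LinearMap.sub_apply, LinearMap.add_apply, LinearMap.smul_apply,
      LinearMap.smul_apply, LinearMap.smul_apply, L4, L4, L4]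
    refine comb4 _ ?_
    simp only [i2u, i2l, i2, qint_natCast, pow_succ, zp2l, zpm2l, zp1l, zpm1l]
    linear_combination (q * (q ^ (α j)) * ((q ^ 2) ^ (α i)) * (q - q⁻¹)⁻¹) * hRel2 + (q⁻¹ * (q ^ (α j))⁻¹ * ((q ^ 2) ^ (α i))⁻¹ * (q - q⁻¹)⁻¹ * (q ^ 2 - (q ^ 2)⁻¹)⁻¹ + (-1:ℂ) * q⁻¹ * (q ^ (α j)) * ((q ^ 2) ^ (α i))⁻¹ * (q - q⁻¹)⁻¹ * (q ^ 2 - (q ^ 2)⁻¹)⁻¹ + q⁻¹ * (q ^ (α j)) * ((q ^ 2) ^ (α i)) * (q - q⁻¹)⁻¹ * (q ^ 2 - (q ^ 2)⁻¹)⁻¹ + (-1:ℂ) * q * (q ^ (α j))⁻¹ * ((q ^ 2) ^ (α i)) * (q - q⁻¹)⁻¹ * (q ^ 2 - (q ^ 2)⁻¹)⁻¹) * hqr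
end
end
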